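/- Let n ≥ 3 and let u be a word in variables x_1,...,x_n such that: (a) for each 1 ≤ i ≤ n−1, the projection u[x_i,x_{i+1}] equals x_i x_{i+1} x_i x_{i+1}, and (b) for each 1 ≤ i ≤ n−2, the projection u[x_i,x_{i+2}] is not equal to x_i x_{i+2} x_i x_{i+2}. Then u equals the chain word C_n. -/

import Mathlib

/-- The chain words: `C 0 = 1`, `C 1 = x₁²`, and if `C k = c · xₖ` then
`C (k+1) = c · x_{k+1} · xₖ · x_{k+1}`. Variables are the positive naturals. -/
def chainW : ℕ → List ℕ
  | 0 => []
  | 1 => [1, 1]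
  | (k+2) => (chainW (k+1)).dropLast ++ [k+2, k+1, k+2]

/-- Projection of a word to the two variables `i`, `j` (deleting all other letters). -/
def proj2 (u : List ℕ) (i j : ℕ) : List ℕ := u.filter (fun a => a == i || a == j)

/-! Induction on `n`, from `n = 2`, where `u = u[x₁,x₂] = x₁x₂x₁x₂`. Deleting both occurrences
of `x_{n+1}` from a word satisfying the hypotheses for `n + 1` leaves one satisfying them for `n`,
hence equal to `C n = c xₙ x_{n-1} xₙ` with `xₙ ∉ c`. As `u[xₙ,x_{n+1}]` alternates, one `x_{n+1}`
sits between the two `xₙ` and the other at the end, so either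
`u = c xₙ x_{n-1} x_{n+1} xₙ x_{n+1} = C (n+1)` or `u = c xₙ x_{n+1} x_{n-1} xₙ x_{n+1}`, and in
the latter `u[x_{n-1},x_{n+1}]` alternates, against (b). -/

theorem List.exists_eq_append_cons_append_cons_of_count_eq_two {α : Type*} [DecidableEq α]
    {l : List α} {a : α} (h : l.count a = 2) :
    ∃ A B C, l = A ++ a :: B ++ a :: C ∧ a ∉ A ∧ a ∉ B ∧ a ∉ C := by
  have ha : a ∈ l := List.count_pos_iff.mp (by omega)
  obtain ⟨A, t, rfl, hA⟩ := List.eq_append_cons_of_mem ha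
  have ht : t.count a = 1 := by simpa [List.count_eq_zero_of_not_mem hA] using h
  have ha' : a ∈ t := List.count_pos_iff.mp (by omega)
  obtain ⟨B, C, rfl, hB⟩ := List.eq_append_cons_of_mem ha'
  have hC : C.count a = 0 := by simpa [List.count_eq_zero_of_not_mem hB] using ht
  exact ⟨A, B, C, by simp, hA, hB, List.count_eq_zero.mp hC⟩

theorem proj2_append_cons_append_cons_of_ne {A B C : List ℕ} {a i j : ℕ} (hi : a ≠ i)
    (hj : a ≠ j) : proj2 (A ++ a :: B ++ a :: C) i j = proj2 (A ++ B ++ C) i j := by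
  simp [proj2, hi, hj]

theorem proj2_eq_replicate_of_not_mem {l : List ℕ} {i j : ℕ} (hj : j ∉ l) :
    proj2 l i j = List.replicate (l.count i) i := by
  rw [proj2, ← List.filter_beq]
  refine List.filter_congr fun a ha => ?_
  have : a ≠ j := fun h => hj (h ▸ ha)
  simp [this]

theorem List.replicate_append_cons_eq_alternating_iff {α : Type*} {x y : α} (hxy : x ≠ y)
    {p q r : ℕ} :
    List.replicate p x ++ y :: (List.replicate q x ++ y :: List.replicate r x) = [x, y, x, y] ↔
      p = 1 ∧ q = 1 ∧ r = 0 := by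
  rcases p with _ | _ | p <;> rcases q with _ | _ | q <;> rcases r with _ | r <;>
    simp [List.replicate_succ, hxy, hxy.symm]

theorem proj2_append_cons_append_cons_eq_iff {A B C : List ℕ} {i j : ℕ} (hij : i ≠ j)
    (hA : j ∉ A) (hB : j ∉ B) (hC : j ∉ C) :
    proj2 (A ++ j :: B ++ j :: C) i j = [i, j, i, j] ↔
      A.count i = 1 ∧ B.count i = 1 ∧ C.count i = 0 := by
  rw [← List.replicate_append_cons_eq_alternating_iff hij, ← proj2_eq_replicate_of_not_mem hA,
    ← proj2_eq_replicate_of_not_mem hB, ← proj2_eq_replicate_of_not_mem hC]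
  simp [proj2]

theorem List.eq_of_append_append_eq_append_pqp {α : Type*} [DecidableEq α]
    {Q A B C : List α} {p q : α} (hQ : p ∉ Q) (h : A ++ B ++ C = Q ++ [p, q, p])
    (hA : A.count p = 1) (hB : B.count p = 1) (hC : C.count p = 0) :
    (A = Q ++ [p, q] ∧ B = [p] ∨ A = Q ++ [p] ∧ B = [q, p]) ∧ C = [] := by
  obtain rfl : C = [] := by
    obtain rfl | ⟨C, c, rfl⟩ := C.eq_nil_or_concat
    · rfl
    · have hc : c = p := by simpa using congrArg List.getLast? h
      simp [hc] at hC
  have hQ0 := List.count_eq_zero_of_not_mem hQ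
  rw [List.append_nil, List.append_eq_append_iff] at h
  rcases h with ⟨R, rfl, rfl⟩ | ⟨R, rfl, hR⟩
  · simp [List.count_cons] at hB
    omega
  · simp only [List.cons_eq_append_iff] at hR
    rcases hR with ⟨rfl, rfl⟩ | ⟨R, rfl, ⟨rfl, rfl⟩ |
      ⟨R, rfl, ⟨rfl, rfl⟩ | ⟨R, rfl, h⟩⟩⟩
    all_goals simp_all

theorem le_of_mem_chainW : ∀ {m a : ℕ}, a ∈ chainW m → a ≤ m
  | 0, _, h => by simp [chainW] at h
  | 1, _, h => by simp [chainW] at h; omega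
  | m + 2, a, h => by
    rw [chainW, List.mem_append] at h
    rcases h with h | h
    · have := le_of_mem_chainW (List.dropLast_subset _ h)
      omega
    · simp at h; omega

theorem chainW_add_three (m : ℕ) :
    chainW (m + 3) = (chainW (m + 1)).dropLast ++ [m + 2, m + 1, m + 3, m + 2, m + 3] := by
  simp [chainW]

structure IsChainShaped (n : ℕ) (u : List ℕ) : Prop where
  bounds : ∀ a ∈ u, 1 ≤ a ∧ a ≤ n
  count_eq_two : ∀ i : ℕ, 1 ≤ i → i ≤ n → u.count i = 2
  proj2_succ : ∀ i : ℕ, 1 ≤ i → i + 1 ≤ n → proj2 u i (i+1) = [i, i+1, i, i+1]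
  proj2_add_two : ∀ i : ℕ, 1 ≤ i → i + 2 ≤ n → proj2 u i (i+2) ≠ [i, i+2, i, i+2]

namespace IsChainShaped

theorem erase {n : ℕ} {A B C : List ℕ}
    (h : IsChainShaped (n + 1) (A ++ (n + 1) :: B ++ (n + 1) :: C))
    (hA : n + 1 ∉ A) (hB : n + 1 ∉ B) (hC : n + 1 ∉ C) : IsChainShaped n (A ++ B ++ C) where
  bounds a ha := by
    have hne : a ≠ n + 1 := by rintro rfl; simp_all
    have := h.bounds a (by simp at ha ⊢; tauto)
    omega
  count_eq_two i hi hin := by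
    have hne : n + 1 ≠ i := by omega
    simpa [List.count_cons, hne] using h.count_eq_two i hi (by omega)
  proj2_succ i hi hin := by
    rw [← h.proj2_succ i hi (by omega), proj2_append_cons_append_cons_of_ne (by omega) (by omega)]
  proj2_add_two i hi hin := by
    rw [← proj2_append_cons_append_cons_of_ne (a := n + 1) (by omega) (by omega)]
    exact h.proj2_add_two i hi (by omega)

theorem eq_chainW_add_three {m : ℕ} {A B C : List ℕ}
    (h : IsChainShaped (m + 3) (A ++ (m + 3) :: B ++ (m + 3) :: C))
    (hA : m + 3 ∉ A) (hB : m + 3 ∉ B) (hC : m + 3 ∉ C) (hABC : A ++ B ++ C = chainW (m + 2)) :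
    A ++ (m + 3) :: B ++ (m + 3) :: C = chainW (m + 3) := by
  obtain ⟨hpA, hpB, hpC⟩ := (proj2_append_cons_append_cons_eq_iff (by omega) hA hB hC).mp
    (h.proj2_succ (m + 2) (by omega) le_rfl)
  have hQ : m + 2 ∉ (chainW (m + 1)).dropLast := fun hmem => by
    have := le_of_mem_chainW (List.dropLast_subset _ hmem)
    omega
  obtain ⟨⟨rfl, rfl⟩ | ⟨rfl, rfl⟩, rfl⟩ :=
    List.eq_of_append_append_eq_append_pqp hQ hABC hpA hpB hpC
  · simp [chainW_add_three]
  · exfalso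
    apply h.proj2_add_two (m + 1) (by omega) le_rfl
    rw [proj2_append_cons_append_cons_eq_iff (by omega) hA hB hC]
    have := h.count_eq_two (m + 1) (by omega) (by omega)
    simp at this ⊢
    omega

theorem eq_chainW {n : ℕ} (hn : 2 ≤ n) {u : List ℕ} (h : IsChainShaped n u) :
    u = chainW n := by
  induction n, hn using Nat.le_induction generalizing u with
  | base =>
    have hu : proj2 u 1 2 = u := List.filter_eq_self.mpr fun a ha => by
      have := h.bounds a ha
      obtain rfl | rfl : a = 1 ∨ a = 2 := by omega
      all_goals rfl
    rw [← hu, h.proj2_succ 1 le_rfl le_rfl]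
    rfl
  | succ n hn ih =>
    obtain ⟨m, rfl⟩ : ∃ m, n = m + 2 := ⟨n - 2, by omega⟩
    obtain ⟨A, B, C, rfl, hA, hB, hC⟩ :=
      List.exists_eq_append_cons_append_cons_of_count_eq_two
        (h.count_eq_two (m + 3) (by omega) le_rfl)
    exact h.eq_chainW_add_three hA hB hC (ih (h.erase hA hB hC))

end IsChainShaped

/-- Let `n ≥ 3` and let `u` be a word in variables `x₁,…,xₙ` in which every variable
occurs exactly twice, such that `u[xᵢ,x_{i+1}] = xᵢ x_{i+1} xᵢ x_{i+1}` for all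
`1 ≤ i ≤ n-1` and `u[xᵢ,x_{i+2}] ≠ xᵢ x_{i+2} xᵢ x_{i+2}` for all `1 ≤ i ≤ n-2`.
Then `u` is the chain word `C n`. -/
theorem chain_unique (n : ℕ) (hn : 3 ≤ n) (u : List ℕ)
    (hvars : ∀ a ∈ u, 1 ≤ a ∧ a ≤ n)
    (hocc : ∀ i : ℕ, 1 ≤ i → i ≤ n → u.count i = 2)
    (ha : ∀ i : ℕ, 1 ≤ i → i + 1 ≤ n → proj2 u i (i+1) = [i, i+1, i, i+1])
    (hb : ∀ i : ℕ, 1 ≤ i → i + 2 ≤ n → proj2 u i (i+2) ≠ [i, i+2, i, i+2]) :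
    u = chainW n :=
  IsChainShaped.eq_chainW (by omega) ⟨hvars, hocc, ha, hb⟩
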